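/- Suppose x* ∈ ℝⁿ satisfies second-order sufficient conditions with strict complementarity for min f(x) subject to x ≥ 0: x* ≥ 0, ∇f(x*) ≥ 0, x*_i [∇f(x*)]_i = 0 with x*_i + [∇f(x*)]_i > 0 for each i, and wᵀ∇²f(x*)w > 0 for all w ≠ 0 with w_i = 0 whenever x*_i = 0. Define v* by v*_i = √(x*_i). Then ∇F(v*) = 0 and ∇²F(v*) is positive definite, where F(v) = f(v ⊙ v). -/

import Mathlib

/-! With `F v = f (v * v)` and `w = 2 v* ⊙ s`, the chain rule gives
`DF(v*) s = Σ 2 sᵢ v*ᵢ [∇f(x*)]ᵢ`, which vanishes by complementarity, and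
`D²F(v*)[s, s] = D²f(x*)[w, w] + Σ 2 sᵢ² [∇f(x*)]ᵢ`. The second term is nonnegative. Since `w`
vanishes wherever `x*` does, the first term is positive by the second-order condition unless
`w = 0`; but then `s` is supported where `x*ᵢ = 0`, and there strict complementarity makes
`[∇f(x*)]ᵢ > 0`, so the second term is positive. -/

noncomputable def grad {n : ℕ} (f : (Fin n → ℝ) → ℝ) (x : Fin n → ℝ) (i : Fin n) : ℝ :=
  fderiv ℝ f x (Pi.single i 1)

noncomputable def hessQ {n : ℕ} (f : (Fin n → ℝ) → ℝ) (x w : Fin n → ℝ) : ℝ :=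
  fderiv ℝ (fun y => fderiv ℝ f y w) x w

open ContinuousLinearMap Finset

section MulSelf

variable {𝕜 : Type*} [NontriviallyNormedField 𝕜] {𝔸 : Type*} [NormedCommRing 𝔸]
  [NormedAlgebra 𝕜 𝔸] {G : Type*} [NormedAddCommGroup G] [NormedSpace 𝕜 G]

theorem hasFDerivAt_mul_self (v : 𝔸) :
    HasFDerivAt (fun u : 𝔸 => u * u) (mul 𝕜 𝔸 (2 * v)) v := by
  refine ((hasFDerivAt_id v).mul (hasFDerivAt_id v)).congr_fderiv ?_
  ext s
  simp only [mul_apply', add_apply, smul_apply, id_apply, id_eq, smul_eq_mul]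
  ring

theorem fderiv_comp_mul_self_apply {f : 𝔸 → G} {v : 𝔸} (hf : DifferentiableAt 𝕜 f (v * v))
    (s : 𝔸) : fderiv 𝕜 (fun u => f (u * u)) v s = fderiv 𝕜 f (v * v) (2 * v * s) := by
  have h := hf.hasFDerivAt.comp (f := fun u : 𝔸 => u * u) v (hasFDerivAt_mul_self v)
  rw [← Function.comp_def, h.fderiv]
  rfl

theorem fderiv_fderiv_apply_const {f : 𝔸 → G} {x : 𝔸}
    (hf : DifferentiableAt 𝕜 (fderiv 𝕜 f) x) (w w' : 𝔸) :
    fderiv 𝕜 (fun y => fderiv 𝕜 f y w) x w' = fderiv 𝕜 (fderiv 𝕜 f) x w' w := by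
  rw [fderiv_clm_apply hf (differentiableAt_const w)]
  simp

theorem fderiv_fderiv_comp_mul_self_apply {f : 𝔸 → G} {v : 𝔸} (hf : Differentiable 𝕜 f)
    (hf' : DifferentiableAt 𝕜 (fderiv 𝕜 f) (v * v)) (s : 𝔸) :
    fderiv 𝕜 (fun y => fderiv 𝕜 (fun u => f (u * u)) y s) v s =
      fderiv 𝕜 (fun y => fderiv 𝕜 f y (2 * v * s)) (v * v) (2 * v * s) +
        fderiv 𝕜 f (v * v) (2 * (s * s)) := by
  have hfun : (fun y => fderiv 𝕜 (fun u => f (u * u)) y s) =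
      fun y => fderiv 𝕜 f (y * y) (mul 𝕜 𝔸 (2 * s) y) := by
    funext y
    rw [fderiv_comp_mul_self_apply (hf _), mul_apply', mul_right_comm]
  have hD : HasFDerivAt (fun y => fderiv 𝕜 f (y * y))
      ((fderiv 𝕜 (fderiv 𝕜 f) (v * v)).comp (mul 𝕜 𝔸 (2 * v))) v :=
    hf'.hasFDerivAt.comp (f := fun u : 𝔸 => u * u) v (hasFDerivAt_mul_self v)
  rw [hfun, (hD.clm_apply (mul 𝕜 𝔸 (2 * s)).hasFDerivAt).fderiv,
    fderiv_fderiv_apply_const hf']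
  simp only [add_apply, comp_apply, flip_apply, mul_apply']
  rw [add_comm, mul_right_comm 2 s v, ← mul_assoc]

end MulSelf

section Coordinates

variable {n : ℕ} (f : (Fin n → ℝ) → ℝ)

theorem fderiv_apply_eq_sum_grad (x w : Fin n → ℝ) :
    fderiv ℝ f x w = ∑ i, w i * grad f x i := by
  conv_lhs => rw [← univ_sum_single w]
  simp only [map_sum, grad]
  refine sum_congr rfl fun i _ => ?_
  rw [← smul_eq_mul, ← map_smul, ← Pi.single_smul, smul_eq_mul, mul_one]

theorem hessQ_zero (x : Fin n → ℝ) : hessQ f x 0 = 0 :=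
  map_zero _

theorem fderiv_comp_mul_self_apply_eq_sum (hf : Differentiable ℝ f) (v s : Fin n → ℝ) :
    fderiv ℝ (fun u => f (u * u)) v s = ∑ i, 2 * s i * (v i * grad f (v * v) i) := by
  rw [fderiv_comp_mul_self_apply (hf _), fderiv_apply_eq_sum_grad]
  refine sum_congr rfl fun i _ => ?_
  simp only [Pi.mul_apply, Pi.ofNat_apply]
  ring

theorem hessQ_comp_mul_self (hf : ContDiff ℝ 2 f) (v s : Fin n → ℝ) :
    hessQ (fun u => f (u * u)) v s =
      hessQ f (v * v) (2 * v * s) + ∑ i, 2 * s i ^ 2 * grad f (v * v) i := by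
  have hf' : Differentiable ℝ (fderiv ℝ f) :=
    (hf.fderiv_right le_rfl).differentiable one_ne_zero
  rw [hessQ, fderiv_fderiv_comp_mul_self_apply (hf.differentiable two_ne_zero) hf'.differentiableAt,
    fderiv_apply_eq_sum_grad f (v * v) (2 * (s * s))]
  simp only [hessQ, Pi.mul_apply, Pi.ofNat_apply, sq]

end Coordinates

theorem stmt4 {n : ℕ} (f : (Fin n → ℝ) → ℝ) (hf : ContDiff ℝ 2 f)
    (F : (Fin n → ℝ) → ℝ) (hF : ∀ v, F v = f (v * v))
    (xs : Fin n → ℝ)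
    (hx : ∀ i, 0 ≤ xs i)
    (hg : ∀ i, 0 ≤ grad f xs i)
    (hcomp : ∀ i, xs i * grad f xs i = 0)
    (hstrict : ∀ i, 0 < xs i + grad f xs i)
    (h2 : ∀ w : Fin n → ℝ, w ≠ 0 → (∀ i, xs i = 0 → w i = 0) → 0 < hessQ f xs w)
    (vs : Fin n → ℝ) (hv : ∀ i, vs i = Real.sqrt (xs i)) :
    fderiv ℝ F vs = 0 ∧ ∀ s : Fin n → ℝ, s ≠ 0 → 0 < hessQ F vs s := by
  obtain rfl : F = fun v => f (v * v) := funext hF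
  have hvv : vs * vs = xs := funext fun i => by simp [hv i, Real.mul_self_sqrt (hx i)]
  have hvs_zero (i : Fin n) : vs i = 0 ↔ xs i = 0 := by rw [hv i, Real.sqrt_eq_zero (hx i)]
  have hvg (i : Fin n) : vs i * grad f xs i = 0 := by
    rcases mul_eq_zero.mp (hcomp i) with h | h
    · rw [(hvs_zero i).2 h, zero_mul]
    · rw [h, mul_zero]
  refine ⟨?_, fun s hs => ?_⟩
  · ext s
    rw [fderiv_comp_mul_self_apply_eq_sum f (hf.differentiable two_ne_zero), hvv]
    simp [hvg]
  rw [hessQ_comp_mul_self f hf, hvv]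
  have hcurv_nonneg : 0 ≤ ∑ i, 2 * s i ^ 2 * grad f xs i :=
    sum_nonneg fun i _ => mul_nonneg (by positivity) (hg i)
  by_cases hw : 2 * vs * s = 0
  · obtain ⟨i, hsi⟩ : ∃ i, s i ≠ 0 := Function.ne_iff.mp hs
    have hxi : xs i = 0 := (hvs_zero i).1 (by simpa [hsi] using congrFun hw i)
    have hgi : 0 < grad f xs i := by simpa [hxi] using hstrict i
    rw [hw, hessQ_zero, zero_add]
    exact sum_pos' (fun j _ => mul_nonneg (by positivity) (hg j))
      ⟨i, mem_univ i, by positivity⟩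
  · have hsupp (i : Fin n) (hi : xs i = 0) : (2 * vs * s) i = 0 := by
      simp [(hvs_zero i).2 hi]
    exact add_pos_of_pos_of_nonneg (h2 _ hw hsupp) hcurv_nonneg
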